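/- arXiv:2305.10207 — 2 statements merged into one kernel-verified Lean document; each statement's English description precedes it below -/
import Mathlib

section
/- (Theorem 3.12(4): Kullback divergence equals diastasis) Let Ω ⊂ ℂⁿ be a bounded domain with Bergman kernel B, Poisson–Bergman kernel P, and diastasis D. Fix z, w ∈ Ω and suppose: B(ξ,z) ≠ 0 and B(ξ,w) ≠ 0 for all ξ ∈ Ω; there exists a holomorphic function h on Ω with exp(h(ξ)) = B(ξ,z)/B(ξ,w) for all ξ ∈ Ω; and the function ξ ↦ h(ξ) B(ξ,z) lies in A²(Ω). Then the Kullback–Leibler divergence of P(z,·)dV from P(w,·)dV equals the diastasis: ∫_Ω P(z,ξ) log( P(z,ξ)/P(w,ξ) ) dV(ξ) = D(z,w) = log( B(z,z)B(w,w) / |B(z,w)|² ). -/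
open MeasureTheory Complex Filter

noncomputable section

/-- Wirtinger derivative `∂/∂z_α` of a function on `ℂⁿ`. -/
def wderiv {n : ℕ} (α : Fin n) (f : (Fin n → ℂ) → ℂ) (z : Fin n → ℂ) : ℂ :=
  (1/2) * (fderiv ℝ f z (Pi.single α 1) - Complex.I * fderiv ℝ f z (Pi.single α Complex.I))

/-- Conjugate Wirtinger derivative `∂/∂z̄_α`. -/
def wderivBar {n : ℕ} (α : Fin n) (f : (Fin n → ℂ) → ℂ) (z : Fin n → ℂ) : ℂ :=
  (1/2) * (fderiv ℝ f z (Pi.single α 1) + Complex.I * fderiv ℝ f z (Pi.single α Complex.I))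

/-- `A²(Ω)`: square-integrable holomorphic functions on `Ω`. -/
def A2 {n : ℕ} (Ω : Set (Fin n → ℂ)) (f : (Fin n → ℂ) → ℂ) : Prop :=
  DifferentiableOn ℂ f Ω ∧ MemLp f 2 (volume.restrict Ω)

/-- `B` is the Bergman kernel of `Ω`: the reproducing kernel of `A²(Ω)`. -/
structure IsBergmanKernel {n : ℕ} (Ω : Set (Fin n → ℂ))
    (B : (Fin n → ℂ) → (Fin n → ℂ) → ℂ) : Prop where
  memA2 : ∀ w ∈ Ω, A2 Ω (fun z => B z w)
  symm : ∀ z ∈ Ω, ∀ w ∈ Ω, B z w = starRingEnd ℂ (B w z)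
  repro : ∀ f, A2 Ω f → ∀ z ∈ Ω, f z = ∫ ξ in Ω, B z ξ * f ξ
  pos : ∀ z ∈ Ω, 0 < (B z z).re

/-- The Poisson–Bergman (Berezin) kernel `P(z,ξ) = |B(z,ξ)|²/B(z,z)`. -/
def Poisson {n : ℕ} (B : (Fin n → ℂ) → (Fin n → ℂ) → ℂ) (z ξ : Fin n → ℂ) : ℝ :=
  ‖B z ξ‖ ^ 2 / (B z z).re

/-- The diastasis `D(z,w) = log( B(z,z)B(w,w) / |B(z,w)|² )`. -/
def Diastasis {n : ℕ} (B : (Fin n → ℂ) → (Fin n → ℂ) → ℂ) (z w : Fin n → ℂ) : ℝ :=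
  Real.log ((B z z).re * (B w w).re / ‖B z w‖ ^ 2)

/-- Theorem 3.12(4): the Kullback–Leibler divergence of `P(z,·)dV`
from `P(w,·)dV` equals the diastasis `D(z,w)`, assuming the kernels `B(·,z)`, `B(·,w)`
are zero-free, `B(·,z)/B(·,w)` admits a holomorphic logarithm `h`, and `h·B(·,z) ∈ A²(Ω)`. -/
theorem kullback_eq_diastasis {n : ℕ} (Ω : Set (Fin n → ℂ))
    (hΩopen : IsOpen Ω) (hΩconn : IsConnected Ω) (hΩbdd : Bornology.IsBounded Ω)
    (B : (Fin n → ℂ) → (Fin n → ℂ) → ℂ) (hB : IsBergmanKernel Ω B)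
    (z : Fin n → ℂ) (hz : z ∈ Ω) (w : Fin n → ℂ) (hw : w ∈ Ω)
    (hnz : ∀ ξ ∈ Ω, B ξ z ≠ 0 ∧ B ξ w ≠ 0)
    (hlog : ∃ h : (Fin n → ℂ) → ℂ, DifferentiableOn ℂ h Ω ∧
      (∀ ξ ∈ Ω, Complex.exp (h ξ) = B ξ z / B ξ w) ∧
      A2 Ω (fun ξ => h ξ * B ξ z)) :
    ∫ ξ in Ω, Poisson B z ξ * Real.log (Poisson B z ξ / Poisson B w ξ)
      = Diastasis B z w := by
  classical
  obtain ⟨h, hhol, hexp, hA2⟩ := hlog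
  have hΩmeas : MeasurableSet Ω := hΩopen.measurableSet
  set ν := volume.restrict Ω with hν
  have hzzpos : 0 < (B z z).re := hB.pos z hz
  have hwwpos : 0 < (B w w).re := hB.pos w hw
  have hzzre : ((B z z).re : ℂ) = B z z :=
    Complex.conj_eq_iff_re.mp (hB.symm z hz z hz).symm
  have hwwre : ((B w w).re : ℂ) = B w w :=
    Complex.conj_eq_iff_re.mp (hB.symm w hw w hw).symm
  have hBzw_ne : B z w ≠ 0 := (hnz z hz).2
  have hAzw : 0 < ‖B z w‖ := norm_pos_iff.mpr hBzw_ne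
  -- L² facts
  have hL2B : MemLp (fun ξ => B ξ z) 2 ν := (hB.memA2 z hz).2
  have hconj : MemLp (fun ξ => (starRingEnd ℂ) (B ξ z)) 2 ν := by
    refine ⟨?_, ?_⟩
    · exact Complex.continuous_conj.comp_aestronglyMeasurable hL2B.1
    · have heq : eLpNorm (fun ξ => (starRingEnd ℂ) (B ξ z)) 2 ν
          = eLpNorm (fun ξ => B ξ z) 2 ν := by
        rw [← eLpNorm_norm, ← eLpNorm_norm (fun ξ => B ξ z)]
        simp
      exact heq ▸ hL2B.2
  set f1 : (Fin n → ℂ) → ℂ := fun ξ => (starRingEnd ℂ) (B ξ z) * (h ξ * B ξ z) with hf1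
  have hI1 : Integrable f1 ν := by
    have hm : MemLp ((fun ξ => (starRingEnd ℂ) (B ξ z)) • (fun ξ => h ξ * B ξ z)) 1 ν :=
      hA2.2.smul hconj
    rw [memLp_one_iff_integrable] at hm
    exact hm.congr (Eventually.of_forall fun ξ => by
      simp [hf1, Pi.smul_apply', smul_eq_mul])
  have hI2 : Integrable (fun ξ => ‖B ξ z‖ ^ 2) ν := by
    have hint := hL2B.integrable_norm_rpow (by norm_num) (by norm_num)
    refine hint.congr (Eventually.of_forall fun ξ => ?_)
    have h2 : ((2:ENNReal).toReal) = ((2:ℕ):ℝ) := by norm_num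
    simp [h2, Real.rpow_natCast]
  -- reproducing-property evaluations
  have E1 : ∫ ξ in Ω, f1 ξ = h z * B z z := by
    rw [setIntegral_congr_fun hΩmeas
      (show Set.EqOn f1 (fun ξ => B z ξ * (h ξ * B ξ z)) Ω from fun ξ hξ => by
        simp only [hf1]; rw [← hB.symm z hz ξ hξ])]
    exact (hB.repro _ hA2 z hz).symm
  have E2 : ∫ ξ in Ω, ((‖B ξ z‖ ^ 2 : ℝ) : ℂ) = B z z := by
    rw [setIntegral_congr_fun hΩmeas
      (show Set.EqOn (fun ξ => ((‖B ξ z‖ ^ 2 : ℝ) : ℂ))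
          (fun ξ => B z ξ * B ξ z) Ω from fun ξ hξ =>
        show ((‖B ξ z‖ ^ 2 : ℝ) : ℂ) = B z ξ * B ξ z by
          rw [hB.symm z hz ξ hξ, mul_comm, Complex.mul_conj, Complex.normSq_eq_norm_sq])]
    exact (hB.repro _ (hB.memA2 z hz) z hz).symm
  have hI2c : Integrable (fun ξ => ((‖B ξ z‖ ^ 2 : ℝ) : ℂ)) ν := hI2.ofReal
  have G2 : ∫ ξ in Ω, ‖B ξ z‖ ^ 2 = (B z z).re := by
    have h1 := integral_re (f := fun ξ => ((‖B ξ z‖ ^ 2 : ℝ) : ℂ)) hI2c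
    rw [hν] at h1
    rw [E2] at h1
    simpa [← Complex.ofReal_pow] using h1
  have F2 : ∫ ξ in Ω, (f1 ξ).re = (h z).re * (B z z).re := by
    have h1 := integral_re (f := f1) hI1
    rw [hν] at h1
    rw [E1] at h1
    have h2 : RCLike.re (h z * B z z) = (h z).re * (B z z).re := by
      have : (h z * B z z).re = (h z).re * (B z z).re := by
        conv_lhs => rw [← hzzre]
        simp [Complex.mul_re]
      simpa using this
    rw [h2] at h1
    simpa using h1
  -- pointwise rewriting of the integrand
  set c : ℝ := Real.log ((B w w).re / (B z z).re) with hc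
  have key : Set.EqOn
      (fun ξ => Poisson B z ξ * Real.log (Poisson B z ξ / Poisson B w ξ))
      (fun ξ => ((B z z).re)⁻¹ * (2 * (f1 ξ).re + c * ‖B ξ z‖ ^ 2)) Ω := by
    intro ξ hξ
    have haz : ‖B z ξ‖ = ‖B ξ z‖ := by
      rw [hB.symm z hz ξ hξ, Complex.norm_conj]
    have haw : ‖B w ξ‖ = ‖B ξ w‖ := by
      rw [hB.symm w hw ξ hξ, Complex.norm_conj]
    have ha : 0 < ‖B ξ z‖ := norm_pos_iff.mpr (hnz ξ hξ).1
    have hb : 0 < ‖B ξ w‖ := norm_pos_iff.mpr (hnz ξ hξ).2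
    have hre : Real.exp (h ξ).re = ‖B ξ z‖ / ‖B ξ w‖ := by
      rw [← Complex.norm_exp, hexp ξ hξ, norm_div]
    have hf1re : (f1 ξ).re = ‖B ξ z‖ ^ 2 * (h ξ).re := by
      have hval : f1 ξ = ((‖B ξ z‖ ^ 2 : ℝ) : ℂ) * h ξ := by
        simp only [hf1]
        rw [mul_comm (h ξ) (B ξ z), ← mul_assoc, mul_comm ((starRingEnd ℂ) (B ξ z)) (B ξ z),
          Complex.mul_conj, Complex.normSq_eq_norm_sq]
      rw [hval, Complex.re_ofReal_mul]
    have hlog1 : Real.log (Poisson B z ξ / Poisson B w ξ) = 2 * (h ξ).re + c := by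
      have hratio : Poisson B z ξ / Poisson B w ξ
          = (‖B ξ z‖ / ‖B ξ w‖) ^ 2 * ((B w w).re / (B z z).re) := by
        simp only [Poisson, haz, haw]
        field_simp
      rw [hratio, Real.log_mul (by positivity) (by positivity), Real.log_pow, ← hre,
        Real.log_exp, hc]
      ring
    show Poisson B z ξ * Real.log (Poisson B z ξ / Poisson B w ξ)
        = ((B z z).re)⁻¹ * (2 * (f1 ξ).re + c * ‖B ξ z‖ ^ 2)
    rw [hlog1, hf1re]
    simp only [Poisson, haz]
    field_simp
  -- assemble
  rw [setIntegral_congr_fun hΩmeas key]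
  have hint1 : Integrable (fun ξ => 2 * (f1 ξ).re) ν := (hI1.re).const_mul 2
  have hint2 : Integrable (fun ξ => c * ‖B ξ z‖ ^ 2) ν := hI2.const_mul c
  rw [MeasureTheory.integral_const_mul, integral_add hint1 hint2,
    MeasureTheory.integral_const_mul, MeasureTheory.integral_const_mul, F2, G2]
  -- final arithmetic
  have hz_re : (h z).re = Real.log ((B z z).re / ‖B z w‖) := by
    have hre : Real.exp (h z).re = (B z z).re / ‖B z w‖ := by
      rw [← Complex.norm_exp, hexp z hz, norm_div]
      congr 1
      conv_lhs => rw [← hzzre]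
      rw [Complex.norm_real, Real.norm_eq_abs, abs_of_pos hzzpos]
    rw [← hre, Real.log_exp]
  have harith : ((B z z).re)⁻¹ * (2 * ((h z).re * (B z z).re) + c * (B z z).re)
      = 2 * (h z).re + c := by
    field_simp
  rw [harith, hz_re, hc, Diastasis]
  rw [show (2 : ℝ) * Real.log ((B z z).re / ‖B z w‖)
      = Real.log (((B z z).re / ‖B z w‖) ^ 2) by rw [Real.log_pow]; push_cast; ring]
  rw [← Real.log_mul (by positivity) (by positivity)]
  congr 1
  field_simp
end
end

section
/- (Proposition 4.9) Let Ω₁, Ω₂ ⊂ ℂⁿ be bounded domains with Bergman kernels B₁, B₂, and let f : Ω₁ → Ω₂ be a proper surjective holomorphic map which is an m-sheeted covering over Ω₂∖V, where V := { f(z) : |J_ℂ f(z)| = 0 } is a measure-zero complex variety, with local inverses f_1⁻¹,…,f_m⁻¹; assume Bell's transformation rule J_ℂ f(z) · B₂(f(z),ζ) = Σ_{k=1}^m B₁(z, f_k⁻¹(ζ)) · conj(J_ℂ f_k⁻¹(ζ)) for z ∈ Ω₁ and ζ ∈ Ω₂∖V (J_ℂ denotes the determinant of the complex Jacobian matrix).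 Then for all z ∈ Ω₁ and ζ ∈ Ω₂∖V: Σ_{k=1}^m |B₁(z, f_k⁻¹(ζ))|² |J_ℂ f_k⁻¹(ζ)|² ≥ (1/m) |B₂(f(z),ζ)|² |J_ℂ f(z)|², i.e. the pushed-forward Poisson–Bergman measure satisfies (κ∘Φ₁)(z) ≥ (B₂(f(z),f(z)) |J_ℂ f(z)|² / (m B₁(z,z))) (Φ₂∘f)(z); moreover equality holds if and only if B₁(z, f_1⁻¹(ζ)) conj(J_ℂ f_1⁻¹(ζ)) = ⋯ = B₁(z, f_m⁻¹(ζ)) conj(J_ℂ f_m⁻¹(ζ)). -/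
open MeasureTheory Complex Filter

noncomputable section

/-- The determinant of the complex Jacobian matrix of a map `f : ℂⁿ → ℂⁿ`. -/
def jacDetC {n : ℕ} (f : (Fin n → ℂ) → (Fin n → ℂ)) (z : Fin n → ℂ) : ℂ :=
  Matrix.det (Matrix.of fun i j => wderiv j (fun u => f u i) z)

open scoped InnerProductSpace

lemma key_cs {m : ℕ} (hm : 0 < m) (a : Fin m → ℂ) :
    ((1:ℝ)/m * ‖∑ k, a k‖ ^ 2 ≤ ∑ k, ‖a k‖ ^ 2) ∧
    ((∑ k, ‖a k‖ ^ 2 = (1:ℝ)/m * ‖∑ k, a k‖ ^ 2) ↔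
      ∀ j k, a j = a k) := by
  have hmR : (0:ℝ) < m := Nat.cast_pos.mpr hm
  set x : EuclideanSpace ℂ (Fin m) := WithLp.toLp 2 (fun _ => (1:ℂ)) with hxdef
  set y : EuclideanSpace ℂ (Fin m) := WithLp.toLp 2 (fun k => a k) with hydef
  have hinner : ⟪x, y⟫_ℂ = ∑ k, a k := by
    simp [PiLp.inner_apply, hxdef, hydef]
  have hx2 : ‖x‖ ^ 2 = m := by
    rw [EuclideanSpace.norm_eq, Real.sq_sqrt (by positivity)]
    simp [hxdef]
  have hy2 : ‖y‖ ^ 2 = ∑ k, ‖a k‖ ^ 2 := by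
    rw [EuclideanSpace.norm_eq, Real.sq_sqrt (by positivity)]
  have hCS : ‖∑ k, a k‖ ^ 2 ≤ m * ∑ k, ‖a k‖ ^ 2 := by
    have h := norm_inner_le_norm (𝕜 := ℂ) x y
    rw [hinner] at h
    have h2 : ‖(∑ k, a k : ℂ)‖ ^ 2 ≤ (‖x‖ * ‖y‖) ^ 2 :=
      pow_le_pow_left₀ (norm_nonneg _) h 2
    rw [mul_pow, hx2, hy2] at h2
    simpa using h2
  have hineq : (1:ℝ)/m * ‖∑ k, a k‖ ^ 2 ≤ ∑ k, ‖a k‖ ^ 2 := by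
    rw [div_mul_eq_mul_div, one_mul, div_le_iff₀ hmR]
    linarith [hCS]
  refine ⟨hineq, ?_, ?_⟩
  · intro hEq
    have heq2 : ‖∑ k, a k‖ ^ 2 = m * ∑ k, ‖a k‖ ^ 2 := by
      field_simp at hEq
      linarith
    by_cases hy0 : y = 0
    · intro j k
      have hj := congrArg (fun v => v j) hy0
      have hk := congrArg (fun v => v k) hy0
      simp [hydef] at hj hk
      rw [hj, hk]
    · have hx0 : x ≠ 0 := by
        intro h0
        have := congrArg (fun v => v ⟨0, hm⟩) h0
        simp [hxdef] at this
      have hnormeq : ‖⟪x, y⟫_ℂ‖ = ‖x‖ * ‖y‖ := by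
        have hsq : ‖⟪x, y⟫_ℂ‖ ^ 2 = (‖x‖ * ‖y‖) ^ 2 := by
          rw [hinner, mul_pow, hx2, hy2, heq2]
        rw [← Real.sqrt_sq (norm_nonneg ⟪x, y⟫_ℂ),
          ← Real.sqrt_sq (mul_nonneg (norm_nonneg x) (norm_nonneg y)), hsq]
      obtain ⟨r, _, hr⟩ := (norm_inner_eq_norm_iff hx0 hy0).mp hnormeq
      intro j k
      have hj := congrArg (fun v => v j) hr
      have hk := congrArg (fun v => v k) hr
      simp [hxdef, hydef] at hj hk
      rw [hj, hk]
  · intro h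
    have i0 : Fin m := ⟨0, hm⟩
    have hc : ∀ k, a k = a i0 := fun k => h k i0
    have hsum : ∑ k, a k = (m : ℂ) * a i0 := by
      rw [Finset.sum_congr rfl fun k _ => hc k]
      simp [Finset.sum_const, Finset.card_univ]
    have hsum2 : ∑ k, ‖a k‖ ^ 2 = m * ‖a i0‖ ^ 2 := by
      rw [Finset.sum_congr rfl fun k _ => by rw [hc k]]
      simp [Finset.sum_const, Finset.card_univ]
    rw [hsum, hsum2, norm_mul, mul_pow]
    simp [Complex.norm_natCast]
    field_simp

/-- Proposition 4.9: for a proper surjective holomorphic map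
`f : Ω₁ → Ω₂` which is an `m`-sheeted covering away from the critical-value set `V`,
assuming Bell's transformation rule, the pushed-forward Poisson–Bergman density
satisfies `Σ_k |B₁(z, f_k⁻¹(ζ))|² |J_ℂ f_k⁻¹(ζ)|² ≥ (1/m)|B₂(f(z),ζ)|² |J_ℂ f(z)|²`,
with equality iff all the terms `B₁(z, f_k⁻¹(ζ)) conj(J_ℂ f_k⁻¹(ζ))` coincide. -/
theorem pushforward_density_lower_bound {n m : ℕ} (hm : 0 < m)
    (Ω₁ Ω₂ : Set (Fin n → ℂ))
    (hΩ₁open : IsOpen Ω₁) (hΩ₁conn : IsConnected Ω₁) (hΩ₁bdd : Bornology.IsBounded Ω₁)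
    (hΩ₂open : IsOpen Ω₂) (hΩ₂conn : IsConnected Ω₂) (hΩ₂bdd : Bornology.IsBounded Ω₂)
    (B₁ B₂ : (Fin n → ℂ) → (Fin n → ℂ) → ℂ)
    (hB₁ : IsBergmanKernel Ω₁ B₁) (hB₂ : IsBergmanKernel Ω₂ B₂)
    (f : (Fin n → ℂ) → (Fin n → ℂ)) (hf : DifferentiableOn ℂ f Ω₁)
    (hfmaps : Set.MapsTo f Ω₁ Ω₂) (hfsurj : Set.SurjOn f Ω₁ Ω₂)
    (hfproper : ∀ K ⊆ Ω₂, IsCompact K → IsCompact (Ω₁ ∩ f ⁻¹' K))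
    (V : Set (Fin n → ℂ)) (hVdef : V = f '' {z | z ∈ Ω₁ ∧ jacDetC f z = 0})
    (hVnull : volume V = 0)
    (g : Fin m → (Fin n → ℂ) → (Fin n → ℂ))
    (hginv : ∀ ζ ∈ Ω₂ \ V, ∀ k, g k ζ ∈ Ω₁ ∧ f (g k ζ) = ζ)
    (hgcover : ∀ ζ ∈ Ω₂ \ V, ∀ x ∈ Ω₁, f x = ζ → ∃ k, g k ζ = x)
    (hginj : ∀ ζ ∈ Ω₂ \ V, Function.Injective fun k => g k ζ)
    (hBell : ∀ z ∈ Ω₁, ∀ ζ ∈ Ω₂ \ V,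
      jacDetC f z * B₂ (f z) ζ
        = ∑ k, B₁ z (g k ζ) * starRingEnd ℂ (jacDetC (g k) ζ)) :
    ∀ z ∈ Ω₁, ∀ ζ ∈ Ω₂ \ V,
      ((1 : ℝ) / m * ‖B₂ (f z) ζ‖ ^ 2 * ‖jacDetC f z‖ ^ 2
        ≤ ∑ k, ‖B₁ z (g k ζ)‖ ^ 2 * ‖jacDetC (g k) ζ‖ ^ 2) ∧
      ((∑ k, ‖B₁ z (g k ζ)‖ ^ 2 * ‖jacDetC (g k) ζ‖ ^ 2
          = (1 : ℝ) / m * ‖B₂ (f z) ζ‖ ^ 2 * ‖jacDetC f z‖ ^ 2)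
        ↔ ∀ j k, B₁ z (g j ζ) * starRingEnd ℂ (jacDetC (g j) ζ)
            = B₁ z (g k ζ) * starRingEnd ℂ (jacDetC (g k) ζ)) := by
  intro z hz ζ hζ
  set a : Fin m → ℂ := fun k => B₁ z (g k ζ) * starRingEnd ℂ (jacDetC (g k) ζ) with ha
  have habs : ∀ k, ‖a k‖ ^ 2
      = ‖B₁ z (g k ζ)‖ ^ 2 * ‖jacDetC (g k) ζ‖ ^ 2 := by
    intro k
    simp [ha, norm_mul, Complex.norm_conj, mul_pow]
  have hsum : ∑ k, a k = jacDetC f z * B₂ (f z) ζ := (hBell z hz ζ hζ).symm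
  have habsS : ‖∑ k, a k‖ ^ 2
      = ‖B₂ (f z) ζ‖ ^ 2 * ‖jacDetC f z‖ ^ 2 := by
    rw [hsum, norm_mul, mul_pow]
    ring
  obtain ⟨h1, h2⟩ := key_cs hm a
  have hterm : ∑ k, ‖B₁ z (g k ζ)‖ ^ 2 * ‖jacDetC (g k) ζ‖ ^ 2
      = ∑ k, ‖a k‖ ^ 2 :=
    (Finset.sum_congr rfl fun k _ => (habs k).symm)
  constructor
  · calc (1 : ℝ) / m * ‖B₂ (f z) ζ‖ ^ 2 * ‖jacDetC f z‖ ^ 2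
        = (1 : ℝ) / m * ‖∑ k, a k‖ ^ 2 := by rw [habsS]; ring
      _ ≤ ∑ k, ‖a k‖ ^ 2 := h1
      _ = _ := hterm.symm
  · rw [hterm, show (1 : ℝ) / m * ‖B₂ (f z) ζ‖ ^ 2 * ‖jacDetC f z‖ ^ 2
        = (1 : ℝ) / m * ‖∑ k, a k‖ ^ 2 by rw [habsS]; ring]
    exact h2
end
end
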